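/- arXiv:1601.05705 — 2 statements merged into one kernel-verified Lean document; each statement's English description precedes it below -/
import Mathlib

section
/- Given a matrix Q ∈ M_{n,r}(ℂ), there exist nonsingular diagonal matrices D₁ of size n and D₂ of size r such that all entries of D₁QD₂ belonging to the normal frame of Q are equal to 1. -/
/-- `(i,j)` is the position of the topmost nonzero entry of column `j` of `Q`
(the first marking step in the construction of the normal frame). -/
def Topmost {n r : ℕ} (Q : Matrix (Fin n) (Fin r) ℂ) (i : Fin n) (j : Fin r) : Prop :=
  Q i j ≠ 0 ∧ ∀ i' : Fin n, i' < i → Q i' j = 0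

/-- `(i,j)` is the position of the leftmost nonzero entry of row `i` of `Q` that was not
marked in the first step (the second marking step). -/
def LeftNew {n r : ℕ} (Q : Matrix (Fin n) (Fin r) ℂ) (i : Fin n) (j : Fin r) : Prop :=
  Q i j ≠ 0 ∧ ¬ Topmost Q i j ∧ ∀ j' : Fin r, j' < j → (Q i j' = 0 ∨ Topmost Q i j')

/-- The normal frame of `Q`: the set of all positions marked in either step. -/
def NormalFrame {n r : ℕ} (Q : Matrix (Fin n) (Fin r) ℂ) : Set (Fin n × Fin r) :=
  {p | Topmost Q p.1 p.2 ∨ LeftNew Q p.1 p.2}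

attribute [local instance] Classical.propDecidable

section Aux

variable {n r : ℕ} {Q : Matrix (Fin n) (Fin r) ℂ}

lemma topmost_unique {i i' : Fin n} {j : Fin r} (h : Topmost Q i j) (h' : Topmost Q i' j) :
    i = i' := by
  rcases lt_trichotomy i i' with hl | he | hl
  · exact absurd (h'.2 i hl) h.1
  · exact he
  · exact absurd (h.2 i' hl) h'.1

lemma leftnew_unique {i : Fin n} {j j' : Fin r} (h : LeftNew Q i j) (h' : LeftNew Q i j') :
    j = j' := by
  rcases lt_trichotomy j j' with hl | he | hl
  · rcases h'.2.2 j hl with h0 | ht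
    · exact absurd h0 h.1
    · exact absurd ht h.2.1
  · exact he
  · rcases h.2.2 j' hl with h0 | ht
    · exact absurd h0 h'.1
    · exact absurd ht h'.2.1

lemma exists_topmost {j : Fin r} (h : ∃ i, Q i j ≠ 0) : ∃ t, Topmost Q t j := by
  classical
  obtain ⟨i, hi⟩ := h
  set s : Finset (Fin n) := Finset.univ.filter (fun i => Q i j ≠ 0) with hs
  have hne : s.Nonempty := ⟨i, by simp [hs, hi]⟩
  refine ⟨s.min' hne, ?_, ?_⟩
  · have := s.min'_mem hne
    simpa [hs] using this
  · intro i' hi'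
    by_contra h0
    have hmem : i' ∈ s := by simp [hs, h0]
    exact absurd (s.min'_le i' hmem) (not_le.mpr hi')

lemma topmost_lt_of_leftnew {i t : Fin n} {j : Fin r} (hl : LeftNew Q i j)
    (ht : Topmost Q t j) : t < i := by
  by_contra h
  push_neg at h
  rcases eq_or_lt_of_le h with he | hlt
  · exact hl.2.1 (he ▸ ht)
  · exact hl.1 (ht.2 i hlt)

end Aux

/-- The diagonal entries of `D₁`, defined by strong recursion on the row index. -/
noncomputable def d1 (n r : ℕ) (Q : Matrix (Fin n) (Fin r) ℂ) : ℕ → ℂ :=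
  WellFounded.fix Nat.lt_wfRel.wf
    (fun i ih =>
      if h : ∃ (hi : i < n) (j : Fin r) (t : Fin n),
          LeftNew Q ⟨i, hi⟩ j ∧ Topmost Q t j ∧ (t : ℕ) < i then
        ih h.choose_spec.choose_spec.choose h.choose_spec.choose_spec.choose_spec.2.2 *
          Q h.choose_spec.choose_spec.choose h.choose_spec.choose /
          Q ⟨i, h.choose⟩ h.choose_spec.choose
      else 1)

lemma d1_eq (n r : ℕ) (Q : Matrix (Fin n) (Fin r) ℂ) (i : ℕ) :
    d1 n r Q i =
      if h : ∃ (hi : i < n) (j : Fin r) (t : Fin n),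
          LeftNew Q ⟨i, hi⟩ j ∧ Topmost Q t j ∧ (t : ℕ) < i then
        d1 n r Q h.choose_spec.choose_spec.choose *
          Q h.choose_spec.choose_spec.choose h.choose_spec.choose /
          Q ⟨i, h.choose⟩ h.choose_spec.choose
      else 1 := by
  rw [d1, WellFounded.fix_eq]

lemma d1_ne_zero (n r : ℕ) (Q : Matrix (Fin n) (Fin r) ℂ) (i : ℕ) : d1 n r Q i ≠ 0 := by
  induction i using Nat.strong_induction_on with
  | _ i ih =>
    rw [d1_eq]
    split_ifs with h
    · obtain ⟨hl, ht, hlt⟩ := h.choose_spec.choose_spec.choose_spec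
      exact div_ne_zero (mul_ne_zero (ih _ hlt) ht.1) hl.1
    · exact one_ne_zero

lemma d1_leftnew {n r : ℕ} {Q : Matrix (Fin n) (Fin r) ℂ} {i t : Fin n} {j : Fin r}
    (hl : LeftNew Q i j) (ht : Topmost Q t j) :
    d1 n r Q i = d1 n r Q t * Q t j / Q i j := by
  have hcond : ∃ (hi : (i : ℕ) < n) (j' : Fin r) (t' : Fin n),
      LeftNew Q ⟨(i : ℕ), hi⟩ j' ∧ Topmost Q t' j' ∧ (t' : ℕ) < (i : ℕ) :=
    ⟨i.isLt, j, t, by simpa using hl, ht, topmost_lt_of_leftnew hl ht⟩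
  rw [d1_eq, dif_pos hcond]
  have key : ∀ (J : Fin r) (T : Fin n), LeftNew Q i J → Topmost Q T J →
      d1 n r Q ↑T * Q T J / Q i J = d1 n r Q ↑t * Q t j / Q i j := by
    intro J T hL hT
    obtain rfl : J = j := leftnew_unique hL hl
    obtain rfl : T = t := topmost_unique hT ht
    rfl
  exact key _ _ hcond.choose_spec.choose_spec.choose_spec.1
    hcond.choose_spec.choose_spec.choose_spec.2.1

/-- The diagonal entries of `D₂`. -/
noncomputable def d2 (n r : ℕ) (Q : Matrix (Fin n) (Fin r) ℂ) (j : Fin r) : ℂ :=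
  if h : ∃ t, Topmost Q t j then (d1 n r Q h.choose * Q h.choose j)⁻¹ else 1

lemma d2_ne_zero (n r : ℕ) (Q : Matrix (Fin n) (Fin r) ℂ) (j : Fin r) : d2 n r Q j ≠ 0 := by
  rw [d2]
  split_ifs with h
  · exact inv_ne_zero (mul_ne_zero (d1_ne_zero n r Q _) h.choose_spec.1)
  · exact one_ne_zero

lemma d2_topmost {n r : ℕ} {Q : Matrix (Fin n) (Fin r) ℂ} {t : Fin n} {j : Fin r}
    (ht : Topmost Q t j) : d2 n r Q j = (d1 n r Q t * Q t j)⁻¹ := by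
  have h : ∃ t, Topmost Q t j := ⟨t, ht⟩
  rw [d2, dif_pos h, topmost_unique h.choose_spec ht]

/-- Given `Q ∈ M_{n,r}(ℂ)`, there exist nonsingular diagonal matrices `D₁` (size `n`) and
`D₂` (size `r`) such that all entries of `D₁·Q·D₂` belonging to the normal frame of `Q`
equal `1`. -/
theorem exists_diagonal_frame_ones (n r : ℕ) (Q : Matrix (Fin n) (Fin r) ℂ) :
    ∃ D₁ : Fin n → ℂ, ∃ D₂ : Fin r → ℂ, (∀ i, D₁ i ≠ 0) ∧ (∀ j, D₂ j ≠ 0) ∧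
      ∀ p ∈ NormalFrame Q,
        (Matrix.diagonal D₁ * Q * Matrix.diagonal D₂) p.1 p.2 = 1 := by
  refine ⟨fun i => d1 n r Q i, d2 n r Q, fun i => d1_ne_zero n r Q i, d2_ne_zero n r Q, ?_⟩
  rintro ⟨i, j⟩ hp
  have hentry : (Matrix.diagonal (fun i : Fin n => d1 n r Q i) * Q *
      Matrix.diagonal (d2 n r Q)) i j = d1 n r Q i * Q i j * d2 n r Q j := by
    rw [Matrix.mul_diagonal, Matrix.diagonal_mul]
  rw [hentry]
  rcases hp with ht | hl
  · rw [d2_topmost ht]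
    exact mul_inv_cancel₀ (mul_ne_zero (d1_ne_zero n r Q i) ht.1)
  · obtain ⟨t, ht⟩ := exists_topmost ⟨i, hl.1⟩
    rw [d1_leftnew hl ht, d2_topmost ht]
    have h1 : d1 n r Q t ≠ 0 := d1_ne_zero n r Q t
    have h2 : Q t j ≠ 0 := ht.1
    have h3 : Q i j ≠ 0 := hl.1
    field_simp
end

section
/- Let M be a rank-d matroid on {1,…,m} with {1,…,d} a basis, and let A ∈ M_{d,m}(ℂ) realize M over ℂ. Then there exist G ∈ GL_d(ℂ) and a nonsingular diagonal matrix D of size m such that GAD lies in the reduced realization space of M, i.e., GAD realizes M, GAD = (I_d | Ã) for some Ã, and all entries of Ã in the normal frame of Ã equal 1. -/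
/-!
Multiplying on the left by the inverse of the first `d × d` block brings `A` to the form
`(I_d | Q)` without changing the realized matroid. The normal frame of `Q` is a forest: an entry
marked in the second step lies strictly below the topmost entry of its column. So row factors
`a` and column factors `b` with `a i * Q i j * b j = 1` on the frame can be chosen recursively
down the rows, and `diag a · (I_d | Q) · diag (a⁻¹, b) = (I_d | diag a · Q · diag b)`, whose
normal frame is that of `Q`, since the frame depends only on the zero pattern.
-/

/-- `A` realizes the matroid `M` over `ℂ` (ground set `{1,…,m}` encoded as
`Fin d ⊕ Fin (m-d)`, where the left summand plays the role of `{1,…,d}`):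
column subsets of `A` are linearly independent exactly when independent in `M`. -/
def Realizes {d k : ℕ} (M : Matroid (Fin d ⊕ Fin k))
    (A : Matrix (Fin d) (Fin d ⊕ Fin k) ℂ) : Prop :=
  M.E = Set.univ ∧ ∀ J : Set (Fin d ⊕ Fin k),
    M.Indep J ↔ LinearIndependent ℂ (fun j : J => fun i => A i (j : Fin d ⊕ Fin k))

namespace Topmost

variable {n r : ℕ} {Q : Matrix (Fin n) (Fin r) ℂ} {i t : Fin n} {j : Fin r}

lemma unique (hi : Topmost Q i j) (ht : Topmost Q t j) : i = t := by
  rcases lt_trichotomy i t with h | h | h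
  · exact absurd (ht.2 i h) hi.1
  · exact h
  · exact absurd (hi.2 t h) ht.1

lemma lt_of_not_topmost (ht : Topmost Q t j) (hi : Q i j ≠ 0) (hni : ¬Topmost Q i j) :
    t < i := by
  rcases lt_trichotomy t i with h | rfl | h
  · exact h
  · exact absurd ht hni
  · exact absurd (ht.2 i h) hi

lemma exists_of_ne_zero (hi : Q i j ≠ 0) : ∃ t, Topmost Q t j := by
  obtain ⟨t, ht, hmin⟩ := wellFounded_lt.has_min {i | Q i j ≠ 0} ⟨i, hi⟩
  exact ⟨t, ht, fun i' hi' => by_contra fun h => hmin i' h hi'⟩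

end Topmost

lemma LeftNew.unique {n r : ℕ} {Q : Matrix (Fin n) (Fin r) ℂ} {i : Fin n} {j j' : Fin r}
    (h : LeftNew Q i j) (h' : LeftNew Q i j') : j = j' := by
  rcases lt_trichotomy j j' with hlt | heq | hlt
  · exact absurd (h'.2.2 j hlt) (not_or.2 ⟨h.1, h.2.1⟩)
  · exact heq
  · exact absurd (h.2.2 j' hlt) (not_or.2 ⟨h'.1, h'.2.1⟩)

section ZeroPattern

variable {n r : ℕ} {Q Q' : Matrix (Fin n) (Fin r) ℂ}

lemma topmost_congr (hQ : ∀ i j, Q i j = 0 ↔ Q' i j = 0) (i : Fin n) (j : Fin r) :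
    Topmost Q i j ↔ Topmost Q' i j := by
  simp only [Topmost, ne_eq, hQ]

lemma leftNew_congr (hQ : ∀ i j, Q i j = 0 ↔ Q' i j = 0) (i : Fin n) (j : Fin r) :
    LeftNew Q i j ↔ LeftNew Q' i j := by
  simp only [LeftNew, ne_eq, hQ, topmost_congr hQ]

lemma normalFrame_congr (hQ : ∀ i j, Q i j = 0 ↔ Q' i j = 0) :
    NormalFrame Q = NormalFrame Q' := by
  ext p
  exact or_congr (topmost_congr hQ _ _) (leftNew_congr hQ _ _)

end ZeroPattern

section Scaling

variable {n r : ℕ} (Q : Matrix (Fin n) (Fin r) ℂ)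

open Classical in
/-- A second-step frame entry `(i, j)` must scale to the same value as the topmost entry `(t, j)`
of its column; since `t < i`, this determines the row factors recursively. -/
noncomputable def rowScale (i : Fin n) : ℂ :=
  if h : ∃ p : Fin n × Fin r, LeftNew Q i p.2 ∧ Topmost Q p.1 p.2 then
    rowScale h.choose.1 * Q h.choose.1 h.choose.2 / Q i h.choose.2
  else 1
termination_by i
decreasing_by
  exact h.choose_spec.2.lt_of_not_topmost h.choose_spec.1.1 h.choose_spec.1.2.1

open Classical in
noncomputable def colScale (j : Fin r) : ℂ :=
  if h : ∃ t, Topmost Q t j then (rowScale Q h.choose * Q h.choose j)⁻¹ else 1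

variable {Q}

lemma rowScale_ne_zero (i : Fin n) : rowScale Q i ≠ 0 := by
  rw [rowScale]
  split_ifs with h
  · exact div_ne_zero (mul_ne_zero (rowScale_ne_zero _) h.choose_spec.2.1) h.choose_spec.1.1
  · exact one_ne_zero
termination_by i
decreasing_by
  exact h.choose_spec.2.lt_of_not_topmost h.choose_spec.1.1 h.choose_spec.1.2.1

lemma colScale_ne_zero (j : Fin r) : colScale Q j ≠ 0 := by
  rw [colScale]
  split_ifs with h
  · exact inv_ne_zero (mul_ne_zero (rowScale_ne_zero _) h.choose_spec.1)
  · exact one_ne_zero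

lemma rowScale_of_leftNew {i t : Fin n} {j : Fin r} (h : LeftNew Q i j)
    (ht : Topmost Q t j) : rowScale Q i = rowScale Q t * Q t j / Q i j := by
  have hex : ∃ p : Fin n × Fin r, LeftNew Q i p.2 ∧ Topmost Q p.1 p.2 := ⟨(t, j), h, ht⟩
  rw [rowScale, dif_pos hex]
  have hspec := hex.choose_spec
  generalize hex.choose = p at hspec ⊢
  obtain ⟨hj, ht'⟩ := hspec
  obtain rfl := h.unique hj
  obtain rfl := ht.unique ht'
  rfl

lemma colScale_of_topmost {t : Fin n} {j : Fin r} (ht : Topmost Q t j) :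
    colScale Q j = (rowScale Q t * Q t j)⁻¹ := by
  have hex : ∃ t, Topmost Q t j := ⟨t, ht⟩
  rw [colScale, dif_pos hex, hex.choose_spec.unique ht]

lemma rowScale_mul_mul_colScale_of_mem_normalFrame {p : Fin n × Fin r}
    (hp : p ∈ NormalFrame Q) : rowScale Q p.1 * Q p.1 p.2 * colScale Q p.2 = 1 := by
  obtain ⟨i, j⟩ := p
  rcases hp with h | h
  · rw [colScale_of_topmost h]
    exact mul_inv_cancel₀ (mul_ne_zero (rowScale_ne_zero i) h.1)
  · obtain ⟨t, ht⟩ := Topmost.exists_of_ne_zero h.1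
    have hs : rowScale Q t ≠ 0 := rowScale_ne_zero t
    rw [colScale_of_topmost ht, rowScale_of_leftNew h ht]
    field_simp [hs, ht.1, h.1]

end Scaling

lemma exists_scaling_eq_one_on_normalFrame {n r : ℕ} (Q : Matrix (Fin n) (Fin r) ℂ) :
    ∃ a : Fin n → ℂ, (∀ i, a i ≠ 0) ∧ ∃ b : Fin r → ℂ, (∀ j, b j ≠ 0) ∧
      ∀ p ∈ NormalFrame (Matrix.of fun i j => a i * Q i j * b j),
        a p.1 * Q p.1 p.2 * b p.2 = 1 := by
  refine ⟨rowScale Q, rowScale_ne_zero, colScale Q, colScale_ne_zero, fun p hp => ?_⟩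
  rw [normalFrame_congr (Q' := Q) fun i j => by simp [rowScale_ne_zero, colScale_ne_zero]] at hp
  exact rowScale_mul_mul_colScale_of_mem_normalFrame hp

section IdentityBlock

open Matrix

variable {K : Type*} [Field K] {d : ℕ} {ι : Type*}

lemma exists_isUnit_det_mul_eq_fromCols_one [Fintype ι] (A : Matrix (Fin d) (Fin d ⊕ ι) K)
    (hA : IsUnit A.toCols₁.det) :
    ∃ B : Matrix (Fin d) (Fin d) K, IsUnit B.det ∧ ∃ Q, B * A = fromCols 1 Q := by
  refine ⟨A.toCols₁⁻¹, isUnit_nonsing_inv_det _ hA, A.toCols₁⁻¹ * A.toCols₂, ?_⟩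
  rw [← nonsing_inv_mul _ hA, ← mul_fromCols, fromCols_toCols]

lemma diagonal_mul_fromCols_one_mul_diagonal [Fintype ι] [DecidableEq ι] {a : Fin d → K}
    (ha : ∀ i, a i ≠ 0) (Q : Matrix (Fin d) ι K) (b : ι → K) :
    diagonal a * fromCols (1 : Matrix (Fin d) (Fin d) K) Q *
        diagonal (Sum.elim (fun i => (a i)⁻¹) b) =
      fromCols 1 (of fun i j => a i * Q i j * b j) := by
  refine Matrix.ext fun i j => ?_
  rw [mul_diagonal, diagonal_mul]
  rcases j with j | j
  · simp only [fromCols_apply_inl, Sum.elim_inl, one_apply]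
    split_ifs with hij
    · subst hij; field_simp [ha i]
    · simp
  · simp only [fromCols_apply_inr, Sum.elim_inr, of_apply]

end IdentityBlock

section Realizes

variable {d k : ℕ} {M : Matroid (Fin d ⊕ Fin k)} {A : Matrix (Fin d) (Fin d ⊕ Fin k) ℂ}

lemma Realizes.isUnit_det_toCols₁ (hA : Realizes M A) (hbase : M.IsBase (Set.range Sum.inl)) :
    IsUnit A.toCols₁.det := by
  rw [← Matrix.isUnit_iff_isUnit_det, ← Matrix.linearIndependent_cols_iff_isUnit]
  exact ((hA.2 _).1 hbase.indep).comp (Set.rangeFactorization Sum.inl)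
    (Set.rangeFactorization_injective.2 Sum.inl_injective)

lemma Realizes.mul_mul_diagonal (hA : Realizes M A) {G : Matrix (Fin d) (Fin d) ℂ}
    (hG : IsUnit G.det) {D : Fin d ⊕ Fin k → ℂ} (hD : ∀ j, D j ≠ 0) :
    Realizes M (G * A * Matrix.diagonal D) := by
  refine ⟨hA.1, fun J => (hA.2 J).trans ?_⟩
  have hker : LinearMap.ker G.mulVecLin = ⊥ := LinearMap.ker_eq_bot.2
    (Matrix.mulVec_injective_iff_isUnit.2 ((Matrix.isUnit_iff_isUnit_det G).2 hG))
  have hcols : (fun j : J => fun i => (G * A * Matrix.diagonal D) i j) =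
      (fun j : J => Units.mk0 (D j) (hD j)) • (G.mulVecLin ∘ fun j : J => fun i => A i j) := by
    ext j i
    rw [Matrix.mul_diagonal]
    simp only [Pi.smul_apply', Pi.smul_apply, Function.comp_apply, Matrix.mulVecLin_apply,
      Matrix.mulVec, dotProduct, Units.smul_mk0, smul_eq_mul, Matrix.mul_apply]
    exact mul_comm _ _
  rw [hcols, LinearIndependent.units_smul_iff, G.mulVecLin.linearIndependent_iff hker]

end Realizes

/-- If `A` realizes a matroid `M` (on ground set `{1,…,m}`, with `{1,…,d}` a basis), then
there are `G ∈ GL_d(ℂ)` and a nonsingular diagonal matrix `D` such that `G·A·D` lies in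
the reduced realization space of `M`: it realizes `M`, has the form `(I_d | Ã)`, and all
entries of `Ã` in the normal frame of `Ã` equal `1`. -/
theorem exists_reduced_form (d k : ℕ) (M : Matroid (Fin d ⊕ Fin k))
    (hbase : M.IsBase (Set.range Sum.inl))
    (A : Matrix (Fin d) (Fin d ⊕ Fin k) ℂ) (hA : Realizes M A) :
    ∃ G : Matrix (Fin d) (Fin d) ℂ, IsUnit G.det ∧
      ∃ D : Fin d ⊕ Fin k → ℂ, (∀ j, D j ≠ 0) ∧
        Realizes M (G * A * Matrix.diagonal D) ∧
        ∃ At : Matrix (Fin d) (Fin k) ℂ,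
          G * A * Matrix.diagonal D = Matrix.fromCols 1 At ∧
          ∀ p ∈ NormalFrame At, At p.1 p.2 = 1 := by
  obtain ⟨B, hB, Q, hBA⟩ :=
    exists_isUnit_det_mul_eq_fromCols_one A (hA.isUnit_det_toCols₁ hbase)
  obtain ⟨a, ha, b, hb, hframe⟩ := exists_scaling_eq_one_on_normalFrame Q
  have hG : IsUnit (Matrix.diagonal a * B).det := by
    rw [Matrix.det_mul, Matrix.det_diagonal]
    exact (isUnit_iff_ne_zero.2 (Finset.prod_ne_zero_iff.2 fun i _ => ha i)).mul hB
  have hD : ∀ j, Sum.elim (fun i => (a i)⁻¹) b j ≠ 0 := by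
    rintro (i | j)
    exacts [inv_ne_zero (ha i), hb j]
  refine ⟨Matrix.diagonal a * B, hG, _, hD, hA.mul_mul_diagonal hG hD, _, ?_, hframe⟩
  rw [Matrix.mul_assoc (Matrix.diagonal a), hBA, diagonal_mul_fromCols_one_mul_diagonal ha]
end
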